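/- Let b ≥ 2 be an integer and T1, T2, T3 nonempty lists of integers ≥ 2 with tridiagonal discriminants d1, d2, d3 satisfying δ := 1/d1 + 1/d2 + 1/d3 > 1. Let di′ be the discriminant of Ti minus its last entry, and e := Σ di′/di. Consider the fork graph with a central vertex B of weight b joined to the last entry of each chain Ti. Define u_B = (δ − 1)/(b − e), and for the j-th vertex of Ti define u_{i,j} = (u_B·d(Ti,<j) + d(Ti,>j))/di, where Ti,<j and Ti,>j are the prefix before and suffix after position j of Ti. Then (u_B, (u_{i,j})) solves the adjunction system: for every vertex v of the fork, (weight of v)·u_v − Σ_{w adjacent to v} u_w = 2 − deg(v). -/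

import Mathlib

/-!
The discriminants of the prefixes and suffixes of a chain obey the continuant recurrence
`d(a₁ … aₖ) = aₖ · d(a₁ … aₖ₋₁) - d(a₁ … aₖ₋₂)` (Laplace expansion along the first row, together
with the symmetry `d(T) = d(reverse T)`). Since `d(T) · u_j = u_B · d(T_{<j}) + d(T_{>j})` is linear in
a prefix and a suffix discriminant, each twig equation is a combination of two such recurrences.
At the central vertex, `b · u_B - Σᵢ u_{i,nᵢ} = u_B (b - e) - δ = -1`. Finally `b - e > 0`: for an
admissible chain `d(T.dropLast) < d(T)`, so `e ≤ 3 - δ < 2 ≤ b`.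
-/

/-- The tridiagonal matrix with diagonal entries given by the list `T`
and entries `-1` on the sub- and super-diagonal. -/
def tridiagMatrix (T : List ℤ) : Matrix (Fin T.length) (Fin T.length) ℤ :=
  Matrix.of fun i j =>
    if i = j then T.get i
    else if (i : ℕ) + 1 = (j : ℕ) ∨ (j : ℕ) + 1 = (i : ℕ) then -1 else 0

/-- The discriminant of a chain `T`: the determinant of the associated tridiagonal
matrix (so the discriminant of the empty list is `1`). -/
def chainDisc (T : List ℤ) : ℤ := (tridiagMatrix T).det

/-- The candidate log discrepancy of the `j`-th vertex (1-indexed) of a twig `T` of a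
fork whose branching component has log discrepancy `uB`:
`u_{i,j} = (uB·d(T_{<j}) + d(T_{>j})) / d(T)`. -/
def forkTwigLd (T : List ℤ) (uB : ℚ) (j : ℕ) : ℚ :=
  (uB * (chainDisc (T.take (j - 1)) : ℚ) + (chainDisc (T.drop j) : ℚ)) / (chainDisc T : ℚ)

/-- The adjunction equations along a twig `T` of the fork, attached to the central
vertex via its last entry: for each `1 ≤ j ≤ n`,
`a_j·u_j − u_{j−1} − u_{j+1} = 2 − deg(j)`, where the "previous" value is `0` for
`j = 1` and the "next" value is `uB` (the central vertex) for `j = n`; the degree of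
the `j`-th vertex is `(if j = 1 then 0 else 1) + 1`. -/
def TwigAdjunctionEqns (T : List ℤ) (uB : ℚ) (u : ℕ → ℚ) : Prop :=
  ∀ j, 1 ≤ j → j ≤ T.length →
    (T.getD (j - 1) 0 : ℚ) * u j - (if j = 1 then 0 else u (j - 1)) -
        (if j = T.length then uB else u (j + 1)) =
      2 - ((if j = 1 then 0 else 1) + 1)

theorem chainDisc_nil : chainDisc [] = 1 := by
  simp [chainDisc]

theorem chainDisc_singleton (a : ℤ) : chainDisc [a] = a := by
  simp [chainDisc, tridiagMatrix]

theorem chainDisc_cons_cons (a b : ℤ) (L : List ℤ) :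
    chainDisc (a :: b :: L) = a * chainDisc (b :: L) - chainDisc L := by
  -- retyped over `Fin (n + 1 + 1)` so that the Laplace expansion lemmas apply syntactically
  let A : Matrix (Fin (L.length + 1 + 1)) (Fin (L.length + 1 + 1)) ℤ := tridiagMatrix (a :: b :: L)
  have hrow : ∀ j : Fin L.length, A 0 j.succ.succ = 0 := fun j => by
    simp [A, tridiagMatrix, Fin.ext_iff]
  have hcol : ∀ i : Fin L.length, A i.succ.succ 0 = 0 := fun i => by
    simp [A, tridiagMatrix, Fin.ext_iff]
  have hbL : (A.submatrix Fin.succ Fin.succ).det = chainDisc (b :: L) := by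
    congr 1; ext i j; simp [A, tridiagMatrix, Fin.ext_iff]
  have hL : (A.submatrix (Fin.succ ∘ Fin.succ) (Fin.succAbove 1 ∘ Fin.succ)).det = chainDisc L := by
    congr 1; ext i j; simp [A, tridiagMatrix, Fin.ext_iff, Fin.succAbove, Fin.lt_def]
  have hminor : (A.submatrix Fin.succ (Fin.succAbove 1)).det = -chainDisc L := by
    rw [Matrix.det_succ_column_zero, Fin.sum_univ_succ,
      Finset.sum_eq_zero fun i _ => by simp [hcol], Matrix.submatrix_submatrix, Fin.succAbove_zero, hL]
    simp [A, tridiagMatrix]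
  have h00 : A 0 0 = a := by simp [A, tridiagMatrix]
  have h01 : A 0 1 = -1 := by simp [A, tridiagMatrix]
  change A.det = _
  rw [Matrix.det_succ_row_zero, Fin.sum_univ_succ, Fin.sum_univ_succ,
    Finset.sum_eq_zero fun j _ => by simp [hrow], Fin.succ_zero_eq_one, hminor, Fin.succAbove_zero, hbL,
    h00, h01, Fin.val_zero, Fin.val_one]
  ring

theorem chainDisc_reverse (T : List ℤ) : chainDisc T.reverse = chainDisc T := by
  let e : Fin T.length ≃ Fin T.reverse.length := Fin.revPerm.trans (finCongr T.length_reverse.symm)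
  rw [chainDisc, chainDisc, ← Matrix.det_reindex_self e (tridiagMatrix T)]
  congr 1
  ext i j
  have hi := i.isLt
  have hj := j.isLt
  simp only [List.length_reverse] at hi hj
  simp only [tridiagMatrix, e, Matrix.reindex_apply, Matrix.submatrix_apply, Matrix.of_apply,
    Equiv.symm_trans, finCongr_symm, Fin.revPerm_symm, Equiv.coe_trans, Function.comp_apply,
    finCongr_apply, Fin.revPerm_apply, Fin.ext_iff, Fin.val_rev, Fin.val_cast, List.get_eq_getElem,
    List.getElem_reverse]
  split_ifs <;> first | omega | rfl | congr 1; omega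

theorem chainDisc_append_pair (L : List ℤ) (b a : ℤ) :
    chainDisc (L ++ [b, a]) = a * chainDisc (L ++ [b]) - chainDisc L := by
  rw [← chainDisc_reverse, ← chainDisc_reverse (L ++ [b]), ← chainDisc_reverse L]
  simp [chainDisc_cons_cons]

theorem chainDisc_take_add_two (T : List ℤ) {i : ℕ} (h : i + 2 ≤ T.length) :
    chainDisc (T.take (i + 2)) = T[i + 1] * chainDisc (T.take (i + 1)) - chainDisc (T.take i) := by
  rw [List.take_succ_eq_append_getElem (by omega), List.take_succ_eq_append_getElem (by omega),
    List.append_assoc, List.singleton_append, chainDisc_append_pair]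

theorem chainDisc_drop_eq (T : List ℤ) {i : ℕ} (h : i + 2 ≤ T.length) :
    chainDisc (T.drop i) = T[i] * chainDisc (T.drop (i + 1)) - chainDisc (T.drop (i + 2)) := by
  rw [List.drop_eq_getElem_cons (by omega), List.drop_eq_getElem_cons (by omega), chainDisc_cons_cons]

theorem chainDisc_pos_and_tail_lt {T : List ℤ} (hT : ∀ a ∈ T, 2 ≤ a) (hne : T ≠ []) :
    0 < chainDisc T.tail ∧ chainDisc T.tail < chainDisc T := by
  induction T with
  | nil => exact absurd rfl hne
  | cons a L ih =>
    have ha : 2 ≤ a := hT a List.mem_cons_self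
    rw [List.tail_cons]
    rcases L with _ | ⟨b, L⟩
    · rw [chainDisc_nil, chainDisc_singleton]
      omega
    · obtain ⟨hpos, hlt⟩ := ih (fun x hx => hT x (List.mem_cons_of_mem a hx)) (List.cons_ne_nil b L)
      rw [List.tail_cons] at hpos hlt
      rw [chainDisc_cons_cons]
      constructor <;> nlinarith

theorem chainDisc_pos_and_dropLast_lt {T : List ℤ} (hT : ∀ a ∈ T, 2 ≤ a) (hne : T ≠ []) :
    0 < chainDisc T.dropLast ∧ chainDisc T.dropLast < chainDisc T := by
  have := chainDisc_pos_and_tail_lt (T := T.reverse) (by simpa using hT) (by simpa using hne)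
  rwa [List.tail_reverse, chainDisc_reverse, chainDisc_reverse] at this

theorem chainDisc_pos {T : List ℤ} (hT : ∀ a ∈ T, 2 ≤ a) : 0 < chainDisc T := by
  rcases eq_or_ne T [] with rfl | hne
  · simp [chainDisc_nil]
  · obtain ⟨hpos, hlt⟩ := chainDisc_pos_and_dropLast_lt hT hne
    exact hpos.trans hlt

theorem chainDisc_dropLast_div_add_one_div_le_one {T : List ℤ} (hT : ∀ a ∈ T, 2 ≤ a)
    (hne : T ≠ []) : (chainDisc T.dropLast : ℚ) / chainDisc T + 1 / chainDisc T ≤ 1 := by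
  have hlt := (chainDisc_pos_and_dropLast_lt hT hne).2
  rw [← add_div, div_le_one (by exact_mod_cast chainDisc_pos hT)]
  exact_mod_cast hlt

theorem forkTwigLd_length (T : List ℤ) (uB : ℚ) :
    forkTwigLd T uB T.length = (uB * chainDisc T.dropLast + 1) / chainDisc T := by
  rw [forkTwigLd, List.drop_length, ← List.dropLast_eq_take, chainDisc_nil, Int.cast_one]

theorem twigAdjunctionEqns_forkTwigLd {T : List ℤ} (hT : chainDisc T ≠ 0) (uB : ℚ) :
    TwigAdjunctionEqns T uB (forkTwigLd T uB) := by
  have hd : (chainDisc T : ℚ) ≠ 0 := by exact_mod_cast hT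
  intro j hj hi
  rcases eq_or_ne j 1 with rfl | hj1
  · rcases T with _ | ⟨a, _ | ⟨c, L⟩⟩
    · simp at hi
    · rw [chainDisc_singleton] at hd
      simp only [forkTwigLd, Nat.sub_self, List.getD_cons_zero, List.length_singleton, ↓reduceIte,
        List.take_zero, List.drop_succ_cons, List.drop_zero, chainDisc_nil, chainDisc_singleton]
      field_simp
      ring
    · rw [chainDisc_cons_cons] at hd
      push_cast at hd
      rw [if_pos rfl, if_neg (by simp)]
      simp only [forkTwigLd, Nat.sub_self, Nat.add_one_sub_one, List.getD_cons_zero, List.take_zero,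
        List.take_succ_cons, List.drop_succ_cons, List.drop_zero, chainDisc_nil, chainDisc_singleton,
        chainDisc_cons_cons]
      push_cast
      field_simp
      ring
  obtain ⟨i, rfl⟩ : ∃ i, j = i + 2 := ⟨j - 2, by omega⟩
  have hp := chainDisc_take_add_two T hi
  simp only [forkTwigLd, Nat.add_sub_cancel, add_assoc, Nat.reduceAdd, Nat.add_succ_sub_one,
    List.getD_eq_getElem _ _ hi, show i + 2 ≠ 1 by omega, if_false] at hp ⊢
  rcases Nat.lt_or_ge (i + 2) T.length with hn | hn
  · have hq := chainDisc_drop_eq T (i := i + 1) hn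
    simp only [add_assoc, Nat.reduceAdd] at hq
    rw [if_neg hn.ne]
    field_simp
    push_cast [hp, hq]
    ring
  · rw [List.take_of_length_le hn] at hp
    rw [if_pos (show i + 2 = T.length by omega), List.drop_of_length_le hn, chainDisc_nil,
      List.drop_eq_getElem_cons (by omega),
      List.drop_of_length_le (show T.length ≤ i + 1 + 1 by omega), chainDisc_singleton]
    field_simp
    push_cast [hp]
    ring

/-- **Log discrepancies of an admissible fork solve the adjunction system.**
Let `b ≥ 2` and let `T1, T2, T3` be nonempty lists of integers `≥ 2` with
discriminants `d1, d2, d3` satisfying `δ = 1/d1 + 1/d2 + 1/d3 > 1`; let `di′` be the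
discriminant of `Ti` minus its last entry and `e = Σ di′/di`.  Then
`u_B = (δ − 1)/(b − e)` together with `u_{i,j} = (u_B·d(T_{i,<j}) + d(T_{i,>j}))/di`
solves the adjunction system of the fork: the central vertex (weight `b`, degree `3`,
adjacent to the last vertex of each twig) satisfies
`b·u_B − (u_{1,n₁} + u_{2,n₂} + u_{3,n₃}) = 2 − 3`, and each twig satisfies its
adjunction equations. -/
theorem fork_log_discrepancies_adjunction (b : ℤ) (hb : 2 ≤ b)
    (T1 T2 T3 : List ℤ) (h1ne : T1 ≠ []) (h2ne : T2 ≠ []) (h3ne : T3 ≠ [])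
    (h1 : ∀ a ∈ T1, 2 ≤ a) (h2 : ∀ a ∈ T2, 2 ≤ a) (h3 : ∀ a ∈ T3, 2 ≤ a)
    (hδ : 1 < 1 / (chainDisc T1 : ℚ) + 1 / (chainDisc T2 : ℚ) + 1 / (chainDisc T3 : ℚ)) :
    let δ : ℚ := 1 / (chainDisc T1 : ℚ) + 1 / (chainDisc T2 : ℚ) + 1 / (chainDisc T3 : ℚ)
    let e : ℚ := (chainDisc T1.dropLast : ℚ) / (chainDisc T1 : ℚ) +
      (chainDisc T2.dropLast : ℚ) / (chainDisc T2 : ℚ) +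
      (chainDisc T3.dropLast : ℚ) / (chainDisc T3 : ℚ)
    let uB : ℚ := (δ - 1) / ((b : ℚ) - e)
    ((b : ℚ) * uB -
        (forkTwigLd T1 uB T1.length + forkTwigLd T2 uB T2.length +
          forkTwigLd T3 uB T3.length) = 2 - 3) ∧
      TwigAdjunctionEqns T1 uB (forkTwigLd T1 uB) ∧
      TwigAdjunctionEqns T2 uB (forkTwigLd T2 uB) ∧
      TwigAdjunctionEqns T3 uB (forkTwigLd T3 uB) := by
  intro δ e uB
  have he : e < b := by
    have hb' : (2 : ℚ) ≤ b := by exact_mod_cast hb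
    linarith [chainDisc_dropLast_div_add_one_div_le_one h1 h1ne,
      chainDisc_dropLast_div_add_one_div_le_one h2 h2ne,
      chainDisc_dropLast_div_add_one_div_le_one h3 h3ne]
  have huB : uB * (b - e) = δ - 1 := div_mul_cancel₀ _ (sub_ne_zero.2 he.ne')
  refine ⟨?_, twigAdjunctionEqns_forkTwigLd (chainDisc_pos h1).ne' uB,
    twigAdjunctionEqns_forkTwigLd (chainDisc_pos h2).ne' uB,
    twigAdjunctionEqns_forkTwigLd (chainDisc_pos h3).ne' uB⟩
  simp only [forkTwigLd_length, add_div, mul_div_assoc]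
  linear_combination huB
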